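/- For each k with 2 ≤ k < ω, non(K_{Fin^{⊗k}}) = 𝔟 and cov(K_{Fin^{⊗k}}) = 𝔡. -/

import Mathlib

open Cardinal Filter Set
open scoped ENNReal

noncomputable section

/-- An ideal on a (countable) set `X`, in the sense of the paper: a proper family of
subsets of `X` closed under taking subsets and finite unions and containing all
finite subsets of `X`. -/
structure IsIdealOn {X : Type} (I : Set (Set X)) : Prop where
  subset_mem : ∀ ⦃A B : Set X⦄, A ⊆ B → B ∈ I → A ∈ I
  union_mem : ∀ ⦃A B : Set X⦄, A ∈ I → B ∈ I → A ∪ B ∈ I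
  finite_mem : ∀ ⦃A : Set X⦄, A.Finite → A ∈ I
  proper : (univ : Set X) ∉ I

/-- The finite initial segment `x ↾ n` of `x : X^ω`, as a list (an element of `X^{<ω}`). -/
def seg {X : Type} (x : ℕ → X) (n : ℕ) : List X := (List.range n).map x

/-- The `I`-Miller null ideal `M_I`: the σ-ideal on `X^ω` generated by the sets
`M_φ = {x | ∀^∞ n, x n ∈ φ (x ↾ n)}`, where `φ : X^{<ω} → I`.  (A set is in the
generated σ-ideal iff it is covered by countably many generators.) -/
def MIdeal {X : Type} (I : Set (Set X)) : Set (Set (ℕ → X)) :=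
  {A | ∃ φ : ℕ → List X → Set X, (∀ n s, φ n s ∈ I) ∧
    A ⊆ ⋃ n, {x : ℕ → X | ∀ᶠ m in atTop, x m ∈ φ n (seg x m)}}

/-- The σ-ideal `K_I` on `X^ω` generated by the sets
`K_φ = {x | ∀^∞ n, x n ∈ φ n}`, where `φ : ω → I`. -/
def KIdeal {X : Type} (I : Set (Set X)) : Set (Set (ℕ → X)) :=
  {A | ∃ φ : ℕ → ℕ → Set X, (∀ n m, φ n m ∈ I) ∧
    A ⊆ ⋃ n, {x : ℕ → X | ∀ᶠ m in atTop, x m ∈ φ n m}}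

/-- Additivity `add(J)` of a (σ-)ideal `J`: the least cardinality of a subfamily of `J`
whose union is not in `J`. -/
def addIdeal {Y : Type} (J : Set (Set Y)) : Cardinal :=
  sInf {c | ∃ 𝒜 : Set (Set Y), 𝒜 ⊆ J ∧ ⋃₀ 𝒜 ∉ J ∧ Cardinal.mk 𝒜 = c}

/-- Covering number `cov(J)`: the least cardinality of a subfamily of `J` covering `Y`. -/
def covIdeal {Y : Type} (J : Set (Set Y)) : Cardinal :=
  sInf {c | ∃ 𝒜 : Set (Set Y), 𝒜 ⊆ J ∧ ⋃₀ 𝒜 = Set.univ ∧ Cardinal.mk 𝒜 = c}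

/-- Uniformity `non(J)`: the least cardinality of a subset of `Y` not in `J`. -/
def nonIdeal {Y : Type} (J : Set (Set Y)) : Cardinal :=
  sInf {c | ∃ S : Set Y, S ∉ J ∧ Cardinal.mk S = c}

/-- Cofinality `cof(J)`: the least cardinality of a cofinal (w.r.t. `⊆`) subfamily of `J`. -/
def cofIdeal {Y : Type} (J : Set (Set Y)) : Cardinal :=
  sInf {c | ∃ 𝒜 : Set (Set Y), 𝒜 ⊆ J ∧ (∀ B ∈ J, ∃ A ∈ 𝒜, B ⊆ A) ∧ Cardinal.mk 𝒜 = c}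

/-- `f ≤* g`: eventual domination on `ω^ω`. -/
def LeStar (f g : ℕ → ℕ) : Prop := ∀ᶠ n in atTop, f n ≤ g n

/-- The bounding number `𝔟`. -/
def bNum : Cardinal :=
  sInf {c | ∃ F : Set (ℕ → ℕ), (∀ g : ℕ → ℕ, ∃ f ∈ F, ¬ LeStar f g) ∧ Cardinal.mk F = c}

/-- The dominating number `𝔡`. -/
def dNum : Cardinal :=
  sInf {c | ∃ F : Set (ℕ → ℕ), (∀ f : ℕ → ℕ, ∃ g ∈ F, LeStar f g) ∧ Cardinal.mk F = c}

/-- `A ⊆* B`: almost inclusion (`A \ B` finite). -/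
def AlSub {X : Type} (A B : Set X) : Prop := (A \ B).Finite

/-- The set of cardinalities of witnessing families for `add*_ω(I)`: families `𝒜 ⊆ I`
such that for every countable `B̄ ⊆ I` some `A ∈ 𝒜` satisfies `A ⊄* B` for all `B ∈ B̄`.
`add*_ω(I)` is the minimum of this set (`∞` if it is empty). -/
def addStarOmegaFam {X : Type} (I : Set (Set X)) : Set Cardinal :=
  {c | ∃ 𝒜 : Set (Set X), 𝒜 ⊆ I ∧
    (∀ B : ℕ → Set X, (∀ n, B n ∈ I) → ∃ A ∈ 𝒜, ∀ n, ¬ AlSub A (B n)) ∧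
    Cardinal.mk 𝒜 = c}

/-- The set of cardinalities of witnessing families for `cof*_ω(I)`: families `𝒜` of
countable subsets of `I` such that for every countable `B̄ ⊆ I` there is `Ā ∈ 𝒜` with:
every `B ∈ B̄` satisfies `B ⊆* A` for some `A ∈ Ā`.  `cof*_ω(I)` is the minimum. -/
def cofStarOmegaFam {X : Type} (I : Set (Set X)) : Set Cardinal :=
  {c | ∃ 𝒜 : Set (Set (Set X)), (∀ As ∈ 𝒜, As.Countable ∧ As ⊆ I) ∧
    (∀ B : ℕ → Set X, (∀ n, B n ∈ I) → ∃ As ∈ 𝒜, ∀ n, ∃ A ∈ As, AlSub (B n) A) ∧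
    Cardinal.mk 𝒜 = c}

/-- The set of cardinalities of witnessing families for `non*_ω(I)`: families `𝒜` of
infinite subsets of `X` such that for every countable `B̄ ⊆ I` there is `A ∈ 𝒜` with
`A ∩ B` finite for all `B ∈ B̄`.  `non*_ω(I)` is the minimum of this set. -/
def nonStarOmegaFam {X : Type} (I : Set (Set X)) : Set Cardinal :=
  {c | ∃ 𝒜 : Set (Set X), (∀ A ∈ 𝒜, A.Infinite) ∧
    (∀ B : ℕ → Set X, (∀ n, B n ∈ I) → ∃ A ∈ 𝒜, ∀ n, (A ∩ B n).Finite) ∧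
    Cardinal.mk 𝒜 = c}

/-- The set of cardinalities of witnessing families for `cov*(I)`: families `𝒜 ⊆ I` such
that every infinite `B ⊆ X` has infinite intersection with some member of `𝒜`.
`cov*(I)` is the minimum of this set (`∞` if it is empty, i.e. if `I` is not tall). -/
def covStarFam {X : Type} (I : Set (Set X)) : Set Cardinal :=
  {c | ∃ 𝒜 : Set (Set X), 𝒜 ⊆ I ∧
    (∀ B : Set X, B.Infinite → ∃ A ∈ 𝒜, (A ∩ B).Infinite) ∧ Cardinal.mk 𝒜 = c}

/-- The set of cardinalities of witnessing families for `non*(I)`: families `𝒜` of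
infinite subsets of `X` such that every `B ∈ I` has finite intersection with some
member of `𝒜`.  `non*(I)` is the minimum of this set. -/
def nonStarFam {X : Type} (I : Set (Set X)) : Set Cardinal :=
  {c | ∃ 𝒜 : Set (Set X), (∀ A ∈ 𝒜, A.Infinite) ∧
    (∀ B ∈ I, ∃ A ∈ 𝒜, (A ∩ B).Finite) ∧ Cardinal.mk 𝒜 = c}

/-- The meager ideal of the product space `X^ω`, where `X` carries the discrete
topology (for countable `X` this is a Polish space). -/
def meagerIdeal (X : Type) : Set (Set (ℕ → X)) :=
  letI : TopologicalSpace X := ⊥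
  {A : Set (ℕ → X) | IsMeagre A}

/-- The Fubini product `I ⊗ J` of two ideals. -/
def Fubini {X Y : Type} (I : Set (Set X)) (J : Set (Set Y)) : Set (Set (X × Y)) :=
  {A | {x : X | {y : Y | (x, y) ∈ A} ∉ J} ∈ I}

/-- The ideal `Fin` of finite subsets of `X`. -/
def finIdeal (X : Type) : Set (Set X) := {A : Set X | A.Finite}

/-- The nowhere dense ideal on `2^{<ω}`: `A` belongs to it iff for every `s` there is an
extension `t ⊇ s` none of whose extensions belongs to `A`. -/
def nwdIdeal : Set (Set (List Bool)) :=
  {A | ∀ s : List Bool, ∃ t : List Bool, s <+: t ∧ ∀ u : List Bool, t <+: u → u ∉ A}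

/-- A submeasure: monotone, finitely subadditive, vanishing on `∅`. -/
def IsSubmeasure (φ : Set ℕ → ℝ≥0∞) : Prop :=
  φ ∅ = 0 ∧ (∀ A B : Set ℕ, A ⊆ B → φ A ≤ φ B) ∧ ∀ A B : Set ℕ, φ (A ∪ B) ≤ φ A + φ B

/-- `I` is gradually fragmented: there are a partition `⟨P n⟩` of `ω` into nonempty finite
sets and submeasures `φ n` with `A ∈ I ↔ sup_n φ n (A ∩ P n) < ∞`, together with
`f : ω → ω` such that for all `n, i`, for all but finitely many `j`: any family of at
most `i` subsets of `P j`, each of `φ j`-value `≤ n`, has union of `φ j`-value `≤ f n`. -/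
def GraduallyFragmented (I : Set (Set ℕ)) : Prop :=
  ∃ (P : ℕ → Set ℕ) (φ : ℕ → Set ℕ → ℝ≥0∞) (f : ℕ → ℕ),
    (∀ n, (P n).Finite) ∧ (∀ n, (P n).Nonempty) ∧
    (∀ n m, n ≠ m → Disjoint (P n) (P m)) ∧ (⋃ n, P n) = Set.univ ∧
    (∀ n, IsSubmeasure (φ n)) ∧
    (∀ A : Set ℕ, A ∈ I ↔ (⨆ n, φ n (A ∩ P n)) < ⊤) ∧
    (∀ n i : ℕ, ∀ᶠ j in atTop, ∀ ℬ : Finset (Set ℕ), ℬ.card ≤ i →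
      (∀ B ∈ ℬ, B ⊆ P j) → (∀ B ∈ ℬ, φ j B ≤ (n : ℝ≥0∞)) →
      φ j (⋃ B ∈ ℬ, B) ≤ ((f n : ℕ) : ℝ≥0∞))

/-- The basic clopen cylinder of `2^ω` determined by a finite binary string. -/
def cylSet (s : List Bool) : Set (ℕ → Bool) :=
  {x | ∀ i : Fin s.length, x i.val = s.get i}

/-- `A ⊆ 2^ω` is null for the uniform (coin-flipping) product measure: for every `ε > 0`
it is covered by countably many cylinders of total weight `≤ ε` (the cylinder of a
string `s` has weight `2^{-|s|}`). -/
def IsNullCantor (A : Set (ℕ → Bool)) : Prop :=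
  ∀ ε : ℝ≥0∞, 0 < ε → ∃ s : ℕ → List Bool,
    A ⊆ (⋃ n, cylSet (s n)) ∧ (∑' n : ℕ, (2⁻¹ : ℝ≥0∞) ^ (s n).length) ≤ ε

/-- Coordinatewise addition modulo 2 on `2^ω`. -/
def xorAdd (x y : ℕ → Bool) : ℕ → Bool := fun n => xor (x n) (y n)

/-- The transitive additivity `add_t(𝒩)` of the null ideal of `2^ω`:
`min {|A| : A ⊆ 2^ω ∧ ∃ X ∈ 𝒩, A + X ∉ 𝒩}`. -/
def addTNull : Cardinal :=
  sInf {c | ∃ A : Set (ℕ → Bool),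
    (∃ N : Set (ℕ → Bool), IsNullCantor N ∧ ¬ IsNullCantor (Set.image2 xorAdd A N)) ∧
    Cardinal.mk A = c}

/-- Kada's cardinal invariant `𝔩`: the least `κ` such that for every `g ∈ ω^ω` there is a
family `𝒮`, of size `κ`, of slaloms `S` with `S i ⊆ {0, …, g i}` and `|S i| ≤ i`, such
that every `f ≤* g` satisfies `f ∈* S` for some `S ∈ 𝒮`. -/
def lNum : Cardinal :=
  sInf {c : Cardinal | ∀ g : ℕ → ℕ, ∃ 𝒮 : Set (ℕ → Finset ℕ),
    (∀ S ∈ 𝒮, ∀ i : ℕ, S i ⊆ Finset.range (g i + 1) ∧ (S i).card ≤ i) ∧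
    (∀ f : ℕ → ℕ, LeStar f g → ∃ S ∈ 𝒮, ∀ᶠ i in atTop, f i ∈ S i) ∧
    Cardinal.mk 𝒮 = c}

/-- Membership in `C ⊆ 2^ω` only depends on the first `n` coordinates. -/
def DeterminedBy (C : Set (ℕ → Bool)) (n : ℕ) : Prop :=
  ∀ x y : ℕ → Bool, (∀ i < n, x i = y i) → (x ∈ C ↔ y ∈ C)

/-- Extension of a finite binary string by `false`s. -/
def extendFalse {n : ℕ} (s : Fin n → Bool) : ℕ → Bool :=
  fun i => if h : i < n then s ⟨i, h⟩ else false

/-- `C ⊆ 2^ω` has uniform product measure `1/2`: for some `n`, membership in `C` depends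
only on the first `n` coordinates and exactly half of the `2^n` cylinders of level `n`
are included in `C`. -/
def HalfMeasure (C : Set (ℕ → Bool)) : Prop :=
  ∃ n : ℕ, DeterminedBy C n ∧
    2 * Nat.card {s : Fin n → Bool // extendFalse s ∈ C} = 2 ^ n

/-- Clopenness in the Cantor space `2^ω` (`Bool` discrete, product topology). -/
def IsClopenCantor (C : Set (ℕ → Bool)) : Prop :=
  letI : TopologicalSpace Bool := ⊥
  IsClopen C

/-- Closedness in the Cantor space `2^ω`. -/
def IsClosedCantor (C : Set (ℕ → Bool)) : Prop :=
  letI : TopologicalSpace Bool := ⊥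
  IsClosed C

/-- `Ω`: the (countable) set of clopen subsets of `2^ω` of measure `1/2`. -/
abbrev SoleckiBase : Type := {C : Set (ℕ → Bool) // IsClopenCantor C ∧ HalfMeasure C}

/-- The Solecki ideal `𝒮` on `Ω`: the ideal generated by the sets
`I_y = {C ∈ Ω : y ∈ C}` for `y ∈ 2^ω`. -/
def SoleckiIdeal : Set (Set SoleckiBase) :=
  {A | ∃ F : Finset (ℕ → Bool), A ⊆ ⋃ y ∈ F, {C : SoleckiBase | y ∈ C.val}}

/-- `cov_ω(𝒩)`: the least cardinality of a family of Lebesgue-null sets of reals such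
that every countable set of reals is contained in one of them. -/
def covOmegaNull : Cardinal :=
  sInf {c | ∃ 𝒜 : Set (Set ℝ), (∀ N ∈ 𝒜, MeasureTheory.volume N = 0) ∧
    (∀ B : Set ℝ, B.Countable → ∃ N ∈ 𝒜, B ⊆ N) ∧ Cardinal.mk 𝒜 = c}

/-- `non(𝒩)`: the least cardinality of a non-null set of reals. -/
def nonNullReal : Cardinal :=
  sInf {c | ∃ S : Set ℝ, MeasureTheory.volume S ≠ 0 ∧ Cardinal.mk S = c}

/-- The eventually different ideal `ℰ𝒟` on `ω × ω`. -/
def EDIdeal : Set (Set (ℕ × ℕ)) :=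
  {A | ∃ k : ℕ, ∀ᶠ n in atTop,
    {m : ℕ | (n, m) ∈ A}.Finite ∧ {m : ℕ | (n, m) ∈ A}.ncard ≤ k}

/-- Characteristic function identifying `P(ω)` with `2^ω`. -/
def chiSet (A : Set ℕ) : ℕ → Bool :=
  fun n => @decide (n ∈ A) (Classical.propDecidable _)

/-- `I ⊆ P(ω)` is `F_σ`: under the identification `P(ω) ≅ 2^ω`, `I` is a countable
union of closed subsets of the Cantor space. -/
def IsFSigmaIdeal (I : Set (Set ℕ)) : Prop :=
  ∃ C : ℕ → Set (ℕ → Bool), (∀ n, IsClosedCantor (C n)) ∧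
    ∀ A : Set ℕ, A ∈ I ↔ chiSet A ∈ ⋃ n, C n

/-- The underlying countable set of `Fin^{⊗(n+1)}`: `FinPowType 0 = ω`,
`FinPowType (n+1) = ω × FinPowType n`. -/
def FinPowType : ℕ → Type
  | 0 => ℕ
  | n + 1 => ℕ × FinPowType n

/-- The iterated Fubini power of `Fin`: `FinPowIdeal 0 = Fin`, and
`FinPowIdeal (n+1) = Fin ⊗ FinPowIdeal n`; thus `Fin^{⊗k} = FinPowIdeal (k-1)`. -/
def FinPowIdeal : (n : ℕ) → Set (Set (FinPowType n))
  | 0 => finIdeal ℕ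
  | n + 1 => Fubini (finIdeal ℕ) (FinPowIdeal n)

/-- `π` `k`-constantly bounding-predicts `f`: for all but finitely many `i` there is
`j ∈ [i, i + k)` with `f j ≤ π (f ↾ j)`. -/
def ConstBddPred (k : ℕ) (π : List ℕ → ℕ) (f : ℕ → ℕ) : Prop :=
  ∀ᶠ i in atTop, ∃ j : ℕ, i ≤ j ∧ j < i + k ∧ f j ≤ π (seg f j)

/-- The constant bounding evasion number `𝔢^const_≤(k)`. -/
def eConstLe (k : ℕ) : Cardinal :=
  sInf {c | ∃ F : Set (ℕ → ℕ),
    (∀ π : List ℕ → ℕ, ∃ f ∈ F, ¬ ConstBddPred k π f) ∧ Cardinal.mk F = c}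

/-- The constant bounding prediction number `𝔳^const_≤(k)`. -/
def vConstLe (k : ℕ) : Cardinal :=
  sInf {c | ∃ Ps : Set (List ℕ → ℕ),
    (∀ f : ℕ → ℕ, ∃ π ∈ Ps, ConstBddPred k π f) ∧ Cardinal.mk Ps = c}

/-- The asymptotic density zero ideal `𝒵` on `ω`. -/
def densityZero : Set (Set ℕ) :=
  {A : Set ℕ | Tendsto (fun n : ℕ => ((A ∩ Iio n).ncard : ℝ) / (n : ℝ)) atTop (nhds (0 : ℝ))}

/-- The σ-ideal `ℰ` on `2^ω` generated by the closed null sets. -/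
def EIdeal : Set (Set (ℕ → Bool)) :=
  {A | ∃ C : ℕ → Set (ℕ → Bool),
    (∀ n, IsClosedCantor (C n) ∧ IsNullCantor (C n)) ∧ A ⊆ ⋃ n, C n}


/-!
A set lies in `K_I` iff it is covered by a single generator `K_φ`, and for `I = Fin^{⊗(n+1)}`
every `φ : ω → I` admits a threshold `h : ω → ω` such that `φ m` misses every point
`(p₀, …, pₙ)` with `h m < p₀` and `h pᵢ < pᵢ₊₁`. Sets of size `< 𝔟` are `≤*`-bounded and a
dominating family of size `𝔡` gives `≤*`-bounded sets covering `X^ω`; bounded sets lie in `K_I`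
because `I` contains the finite sets. Conversely, points of the form `m ↦ (g₀ m, g₁ (g₀ m), …)`
escape such thresholds infinitely often as soon as each `gᵢ` exceeds the relevant threshold
infinitely often on the set where the previous coordinates escaped; choosing the `gᵢ` one at a
time from an unbounded family, or against fewer than `𝔡` thresholds, gives `non(K_I) ≤ 𝔟` and
`cov(K_I) ≥ 𝔡`.
-/

namespace IsIdealOn

variable {X : Type} {I : Set (Set X)}

lemma empty_mem (hI : IsIdealOn I) : ∅ ∈ I := hI.finite_mem finite_empty

lemma biUnion_mem {ι : Type*} (hI : IsIdealOn I) (s : Finset ι) {A : ι → Set X}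
    (hA : ∀ i ∈ s, A i ∈ I) : (⋃ i ∈ s, A i) ∈ I := by
  classical
  induction s using Finset.induction_on with
  | empty => simpa using hI.empty_mem
  | insert a s _ ih =>
    rw [Finset.set_biUnion_insert]
    exact hI.union_mem (hA a (Finset.mem_insert_self a s))
      (ih fun i hi => hA i (Finset.mem_insert_of_mem hi))

end IsIdealOn

lemma isIdealOn_finIdeal (X : Type) [Infinite X] : IsIdealOn (finIdeal X) where
  subset_mem _ _ hAB hB := Finite.subset hB hAB
  union_mem _ _ hA hB := Finite.union hA hB
  finite_mem _ hA := hA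
  proper := infinite_univ

lemma IsIdealOn.fubini_finIdeal {X Y : Type} [Infinite X] {I : Set (Set Y)} (hI : IsIdealOn I) :
    IsIdealOn (Fubini (finIdeal X) I) where
  subset_mem _ _ hAB hB := Finite.subset hB fun x hx hBx =>
    hx (hI.subset_mem (fun y hy => hAB hy) hBx)
  union_mem _ _ hA hB := Finite.subset (Finite.union hA hB) fun x hx => by
    by_contra hAB
    exact hx (hI.union_mem (not_not.mp fun h => hAB (Or.inl h))
      (not_not.mp fun h => hAB (Or.inr h)))
  finite_mem _ hA := Finite.subset finite_empty fun x hx =>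
    hx (hI.finite_mem (hA.preimage (Prod.mk_right_injective x).injOn))
  proper := by simpa [Fubini, finIdeal, hI.proper] using infinite_univ (α := X)

lemma isIdealOn_finPowIdeal : (n : ℕ) → IsIdealOn (FinPowIdeal n)
  | 0 => isIdealOn_finIdeal ℕ
  | n + 1 => (isIdealOn_finPowIdeal n).fubini_finIdeal

instance instEncodableFinPowType : (n : ℕ) → Encodable (FinPowType n)
  | 0 => inferInstanceAs (Encodable ℕ)
  | n + 1 => letI := instEncodableFinPowType n; inferInstanceAs (Encodable (ℕ × FinPowType n))

section CardinalCharacteristics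

variable {F : Set (ℕ → ℕ)}

lemma bNum_le_mk (hF : ∀ g, ∃ f ∈ F, ¬ LeStar f g) : bNum ≤ #F := csInf_le' ⟨F, hF, rfl⟩

lemma dNum_le_mk (hF : ∀ f, ∃ g ∈ F, LeStar f g) : dNum ≤ #F := csInf_le' ⟨F, hF, rfl⟩

lemma exists_leStar_of_mk_lt_bNum (hF : #F < bNum) : ∃ g, ∀ f ∈ F, LeStar f g := by
  by_contra! h
  exact not_lt.mpr (bNum_le_mk h) hF

lemma exists_not_leStar_of_mk_lt_dNum (hF : #F < dNum) : ∃ f, ∀ g ∈ F, ¬ LeStar f g := by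
  by_contra! h
  exact not_lt.mpr (dNum_le_mk h) hF

lemma exists_unbounded_mk_eq_bNum : ∃ F : Set (ℕ → ℕ), (∀ g, ∃ f ∈ F, ¬ LeStar f g) ∧ #F = bNum :=
  csInf_mem (s := {c | ∃ F : Set (ℕ → ℕ), (∀ g, ∃ f ∈ F, ¬ LeStar f g) ∧ #F = c})
    ⟨_, Set.univ, fun g => ⟨g + 1, trivial, fun h => by
      obtain ⟨m, hm⟩ := h.exists
      exact (Nat.lt_succ_self (g m)).not_ge hm⟩, rfl⟩

lemma exists_dominating_mk_eq_dNum : ∃ F : Set (ℕ → ℕ), (∀ f, ∃ g ∈ F, LeStar f g) ∧ #F = dNum :=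
  csInf_mem (s := {c | ∃ F : Set (ℕ → ℕ), (∀ f, ∃ g ∈ F, LeStar f g) ∧ #F = c}) ⟨_, Set.univ, fun f => ⟨f, trivial, Eventually.of_forall fun _ => le_rfl⟩, rfl⟩

lemma aleph0_le_bNum : ℵ₀ ≤ bNum := by
  obtain ⟨F, hF, hFb⟩ := exists_unbounded_mk_eq_bNum
  rw [← hFb]
  by_contra! hfin
  obtain ⟨f, hf, hnle⟩ := hF fun m => (lt_aleph0_iff_set_finite.mp hfin).toFinset.sup (· m)
  exact hnle (Eventually.of_forall fun m =>
    Finset.le_sup (f := (· m)) ((lt_aleph0_iff_set_finite.mp hfin).mem_toFinset.mpr hf))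

end CardinalCharacteristics

lemma nonIdeal_eq {Y : Type} {J : Set (Set Y)} {κ : Cardinal} (hle : ∃ S ∉ J, #S ≤ κ)
    (hlt : ∀ S : Set Y, #S < κ → S ∈ J) : nonIdeal J = κ := by
  obtain ⟨S, hSJ, hSκ⟩ := hle
  unfold nonIdeal
  refine le_antisymm (le_trans (csInf_le' ⟨S, hSJ, rfl⟩) hSκ) (le_csInf ⟨_, S, hSJ, rfl⟩ ?_)
  rintro _ ⟨T, hTJ, rfl⟩
  by_contra! hT
  exact hTJ (hlt T hT)

lemma covIdeal_eq {Y : Type} {J : Set (Set Y)} {κ : Cardinal}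
    (hle : ∃ 𝒜 ⊆ J, ⋃₀ 𝒜 = Set.univ ∧ #𝒜 ≤ κ)
    (hlt : ∀ 𝒜 : Set (Set Y), 𝒜 ⊆ J → #𝒜 < κ → ⋃₀ 𝒜 ≠ Set.univ) : covIdeal J = κ := by
  obtain ⟨𝒜, h𝒜J, h𝒜, h𝒜κ⟩ := hle
  unfold covIdeal
  refine le_antisymm (le_trans (csInf_le' ⟨𝒜, h𝒜J, h𝒜, rfl⟩) h𝒜κ)
    (le_csInf ⟨_, 𝒜, h𝒜J, h𝒜, rfl⟩ ?_)
  rintro _ ⟨ℬ, hℬJ, hℬ, rfl⟩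
  by_contra! hℬκ
  exact hlt ℬ hℬJ hℬκ hℬ

section KIdeal

variable {X : Type} {I : Set (Set X)}

lemma exists_of_mem_KIdeal (hI : IsIdealOn I) {S : Set (ℕ → X)} (hS : S ∈ KIdeal I) :
    ∃ φ : ℕ → Set X, (∀ m, φ m ∈ I) ∧ ∀ x ∈ S, ∀ᶠ m in atTop, x m ∈ φ m := by
  obtain ⟨φ, hφ, hSφ⟩ := hS
  refine ⟨fun m => ⋃ j ∈ Finset.range (m + 1), φ j m,
    fun m => hI.biUnion_mem _ fun j _ => hφ j m, fun x hx => ?_⟩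
  obtain ⟨j, hj⟩ := mem_iUnion.mp (hSφ hx)
  filter_upwards [show ∀ᶠ m in atTop, x m ∈ φ j m from hj, eventually_ge_atTop j] with m hm hjm
  exact mem_iUnion₂.mpr ⟨j, Finset.mem_range.mpr (Nat.lt_succ_of_le hjm), hm⟩

variable [Encodable X]

lemma mem_KIdeal_of_leStar (hI : IsIdealOn I) {S : Set (ℕ → X)} (G : ℕ → ℕ)
    (hS : ∀ x ∈ S, LeStar (fun m => Encodable.encode (x m)) G) : S ∈ KIdeal I :=
  ⟨fun _ m => {p | Encodable.encode p ≤ G m},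
    fun _ m => hI.finite_mem ((finite_Iic (G m)).preimage Encodable.encode_injective.injOn),
    fun x hx => mem_iUnion.mpr ⟨0, hS x hx⟩⟩

lemma mem_KIdeal_of_mk_lt_bNum (hI : IsIdealOn I) {S : Set (ℕ → X)} (hS : #S < bNum) :
    S ∈ KIdeal I := by
  obtain ⟨G, hG⟩ := exists_leStar_of_mk_lt_bNum
    (mk_image_le.trans_lt hS : #((fun x : ℕ → X => fun m => Encodable.encode (x m)) '' S) < bNum)
  exact mem_KIdeal_of_leStar hI G fun x hx => hG _ (mem_image_of_mem _ hx)

lemma exists_KIdeal_cover_mk_le_dNum (hI : IsIdealOn I) :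
    ∃ 𝒜 ⊆ KIdeal I, ⋃₀ 𝒜 = Set.univ ∧ #𝒜 ≤ dNum := by
  obtain ⟨D, hD, hDd⟩ := exists_dominating_mk_eq_dNum
  refine ⟨(fun g => {x : ℕ → X | LeStar (fun m => Encodable.encode (x m)) g}) '' D, ?_, ?_,
    mk_image_le.trans hDd.le⟩
  · rintro _ ⟨g, -, rfl⟩
    exact mem_KIdeal_of_leStar hI g fun _ hx => hx
  · refine eq_univ_of_forall fun x => ?_
    obtain ⟨g, hg, hxg⟩ := hD fun m => Encodable.encode (x m)
    exact ⟨_, mem_image_of_mem _ hg, hxg⟩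

end KIdeal

/-- `Escapes h n t (p₀, …, pₙ)` says `h t < p₀` and `h pᵢ < pᵢ₊₁` for all `i < n`. -/
def Escapes (h : ℕ → ℕ) : (n : ℕ) → ℕ → FinPowType n → Prop
  | 0, t, p => h t < p
  | n + 1, t, p => h t < p.1 ∧ Escapes h n p.1 p.2

lemma Escapes.mono {h h' : ℕ → ℕ} (hh : ∀ s, h' s ≤ h s) :
    ∀ {n t} {p : FinPowType n}, Escapes h n t p → Escapes h' n t p
  | 0, _, _, hp => (hh _).trans_lt hp
  | _ + 1, _, _, hp => ⟨(hh _).trans_lt hp.1, Escapes.mono hh hp.2⟩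

lemma exists_escapes_not_mem : (n : ℕ) → (φ : ℕ → Set (FinPowType n)) →
    (∀ m, φ m ∈ FinPowIdeal n) → ∃ h : ℕ → ℕ, ∀ m p, Escapes h n m p → p ∉ φ m
  | 0, φ, hφ => by
    choose B hB using fun m => Set.Finite.bddAbove (α := ℕ) (hφ m)
    exact ⟨B, fun m p hp hpφ => not_lt.mpr (hB m hpφ) hp⟩
  | n + 1, φ, hφ => by
    have hI := isIdealOn_finPowIdeal n
    choose N hN using fun m =>
      (show {a | {y | (a, y) ∈ φ m} ∉ FinPowIdeal n}.Finite from hφ m).bddAbove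
    have hsection : ∀ m a, N m < a → {y | (a, y) ∈ φ m} ∈ FinPowIdeal n := fun m a ha => by
      by_contra hna
      exact not_lt.mpr (hN m hna) ha
    let ψ : ℕ → Set (FinPowType n) := fun a =>
      ⋃ m ∈ Finset.range (a + 1), {y | (a, y) ∈ φ m ∧ N m < a}
    have hψ : ∀ a, ψ a ∈ FinPowIdeal n := fun a => hI.biUnion_mem _ fun m _ => by
      by_cases ha : N m < a
      · exact hI.subset_mem (fun y hy => hy.1) (hsection m a ha)
      · exact hI.subset_mem (fun y hy => absurd hy.2 ha) hI.empty_mem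
    obtain ⟨h', hh'⟩ := exists_escapes_not_mem n ψ hψ
    -- `h m < p.1` puts `p.1` past column `N m` and past `m`, so `p ∈ φ m` gives `p.2 ∈ ψ p.1`
    refine ⟨fun s => h' s + N s + s, fun m p hp hpφ => ?_⟩
    obtain ⟨hp₁, hp₂⟩ := hp
    have hmp : m < p.1 + 1 := by simp only at hp₁; omega
    have hNp : N m < p.1 := by simp only at hp₁; omega
    refine hh' p.1 p.2 (hp₂.mono fun s => by omega) (mem_iUnion₂.mpr ⟨m, ?_, hpφ, hNp⟩)
    exact Finset.mem_range.mpr hmp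

lemma not_eventually_mem_of_escapes {n : ℕ} {φ : ℕ → Set (FinPowType n)} {h : ℕ → ℕ}
    (hφ : ∀ m p, Escapes h n m p → p ∉ φ m) {x : ℕ → FinPowType n}
    (hx : {m | Escapes h n m (x m)}.Infinite) : ¬ ∀ᶠ m in atTop, x m ∈ φ m := fun hxφ =>
  let ⟨m, hesc, hmem⟩ := (Nat.frequently_atTop_iff_infinite.mpr hx).and_eventually hxφ |>.exists
  hφ m _ hesc hmem

/-- The point `m ↦ (g₀ m, g₁ (g₀ m), g₂ (g₁ (g₀ m)), …)`. -/
def chainPoint : (n : ℕ) → (Fin (n + 1) → ℕ → ℕ) → ℕ → FinPowType n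
  | 0, g, s => g 0 s
  | n + 1, g, s => (g 0 s, chainPoint n (Fin.tail g) (g 0 s))

def majorant (f : ℕ → ℕ) (s : ℕ) : ℕ := (Finset.range (s + 1)).sup f + s

lemma strictMono_majorant (f : ℕ → ℕ) : StrictMono (majorant f) := fun a b hab => by
  have := Finset.sup_mono (f := f) (Finset.range_subset_range.mpr (Nat.add_le_add_right hab.le 1))
  unfold majorant
  omega

lemma le_majorant (f : ℕ → ℕ) (s : ℕ) : f s ≤ majorant f s :=
  (Finset.le_sup (Finset.self_mem_range_succ s)).trans (Nat.le_add_right _ _)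

lemma infinite_lt_majorant_of_not_leStar {E : Set ℕ} (hE : E.Infinite) {u f : ℕ → ℕ}
    (hf : ¬ LeStar f (u ∘ Nat.nth (· ∈ E))) : {m ∈ E | u m < majorant f m}.Infinite := by
  have hJ : {j | u (Nat.nth (· ∈ E) j) < f j}.Infinite := by
    rw [LeStar, Filter.not_eventually] at hf
    exact Nat.frequently_atTop_iff_infinite.mp (hf.mono fun j hj => not_le.mp hj)
  refine Infinite.mono ?_ (hJ.image (Nat.nth_injective hE).injOn)
  rintro _ ⟨j, hj, rfl⟩
  -- `j ≤ nth j` and `majorant f` is monotone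
  exact ⟨Nat.nth_mem_of_infinite hE j, hj.trans_le ((le_majorant f j).trans
    ((strictMono_majorant f).monotone (Nat.nth_strictMono hE).le_apply))⟩

def FrequentlyExceeds (𝓕 H : Set (ℕ → ℕ)) : Prop :=
  ∀ E : (ℕ → ℕ) → Set ℕ, (∀ h ∈ H, (E h).Infinite) →
    ∃ f ∈ 𝓕, ∀ h ∈ H, {m ∈ E h | h m < f m}.Infinite

lemma frequentlyExceeds_majorant_image {F : Set (ℕ → ℕ)} (hF : ∀ g, ∃ f ∈ F, ¬ LeStar f g)
    (h : ℕ → ℕ) : FrequentlyExceeds (majorant '' F) {h} := by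
  intro E hE
  obtain ⟨f, hfF, hf⟩ := hF (h ∘ Nat.nth (· ∈ E h))
  refine ⟨majorant f, mem_image_of_mem _ hfF, fun h' hh' => ?_⟩
  rw [mem_singleton_iff.mp hh']
  exact infinite_lt_majorant_of_not_leStar (hE h rfl) hf

lemma frequentlyExceeds_range_majorant {H : Set (ℕ → ℕ)} (hH : #H < dNum) :
    FrequentlyExceeds (range majorant) H := by
  intro E hE
  obtain ⟨f, hf⟩ := exists_not_leStar_of_mk_lt_dNum
    ((mk_image_le (f := fun h => h ∘ Nat.nth (· ∈ E h))).trans_lt hH)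
  exact ⟨majorant f, mem_range_self f, fun h hh =>
    infinite_lt_majorant_of_not_leStar (hE h hh) (hf _ (mem_image_of_mem _ hh))⟩

lemma exists_chainPoint_escapes {𝓕 H : Set (ℕ → ℕ)} (h𝓕 : ∀ f ∈ 𝓕, StrictMono f)
    (hexc : FrequentlyExceeds 𝓕 H) : (n : ℕ) → (E : (ℕ → ℕ) → Set ℕ) →
      (∀ h ∈ H, (E h).Infinite) → ∃ g : Fin (n + 1) → ℕ → ℕ, (∀ i, g i ∈ 𝓕) ∧
        ∀ h ∈ H, {m ∈ E h | Escapes h n m (chainPoint n g m)}.Infinite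
  | 0, E, hE => by
    obtain ⟨f, hf𝓕, hf⟩ := hexc E hE
    exact ⟨fun _ => f, fun _ => hf𝓕, hf⟩
  | n + 1, E, hE => by
    obtain ⟨f, hf𝓕, hf⟩ := hexc E hE
    -- the tail of the chain starts at `f m`, so it must escape on the images of the good `m`
    obtain ⟨g, hg𝓕, hg⟩ := exists_chainPoint_escapes h𝓕 hexc n
      (fun h => f '' {m ∈ E h | h m < f m})
      (fun h hh => (hf h hh).image (h𝓕 f hf𝓕).injective.injOn)
    refine ⟨Fin.cons f g, Fin.cases hf𝓕 hg𝓕, fun h hh => Infinite.of_image f ?_⟩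
    refine (hg h hh).mono ?_
    rintro _ ⟨⟨m, ⟨hmE, hm⟩, rfl⟩, hesc⟩
    exact ⟨m, ⟨hmE, hm, by simpa [chainPoint] using hesc⟩, rfl⟩

lemma exists_not_mem_KIdeal_finPowIdeal (n : ℕ) :
    ∃ S ∉ KIdeal (FinPowIdeal n), #S ≤ bNum := by
  obtain ⟨F, hF, hFb⟩ := exists_unbounded_mk_eq_bNum
  let M := majorant '' F
  refine ⟨range fun g : Fin (n + 1) → M => chainPoint n fun i => g i, fun hS => ?_, ?_⟩
  · obtain ⟨φ, hφI, hSφ⟩ := exists_of_mem_KIdeal (isIdealOn_finPowIdeal n) hS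
    obtain ⟨h, hh⟩ := exists_escapes_not_mem n φ hφI
    obtain ⟨g, hgM, hg⟩ := exists_chainPoint_escapes
      (forall_mem_image.mpr fun f _ => strictMono_majorant f)
      (frequentlyExceeds_majorant_image hF h) n (fun _ => Set.univ) fun _ _ => infinite_univ
    exact not_eventually_mem_of_escapes hh (by simpa using hg h rfl)
      (hSφ _ ⟨fun i => ⟨g i, hgM i⟩, rfl⟩)
  · calc #(range fun g : Fin (n + 1) → M => chainPoint n fun i => g i)
        ≤ #(Fin (n + 1) → M) := mk_range_le
      _ = #M ^ ((n + 1 : ℕ) : Cardinal) := by simp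
      _ ≤ bNum ^ ((n + 1 : ℕ) : Cardinal) := power_le_power_right (mk_image_le.trans hFb.le)
      _ ≤ bNum := power_nat_le aleph0_le_bNum

lemma sUnion_ne_univ_of_mk_lt_dNum {n : ℕ} {𝒜 : Set (Set (ℕ → FinPowType n))}
    (h𝒜K : 𝒜 ⊆ KIdeal (FinPowIdeal n)) (h𝒜 : #𝒜 < dNum) : ⋃₀ 𝒜 ≠ Set.univ := by
  choose φ hφI hφ using fun A : 𝒜 => exists_of_mem_KIdeal (isIdealOn_finPowIdeal n) (h𝒜K A.2)
  choose h hh using fun A : 𝒜 => exists_escapes_not_mem n (φ A) (hφI A)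
  obtain ⟨g, -, hg⟩ := exists_chainPoint_escapes (forall_mem_range.mpr strictMono_majorant)
    (frequentlyExceeds_range_majorant (mk_range_le.trans_lt h𝒜)) n (fun _ => Set.univ)
    fun _ _ => infinite_univ
  intro hcov
  obtain ⟨A, hA, hgA⟩ := mem_sUnion.mp (hcov ▸ mem_univ (chainPoint n g))
  exact not_eventually_mem_of_escapes (hh ⟨A, hA⟩)
    (by simpa using hg _ (mem_range_self ⟨A, hA⟩)) (hφ ⟨A, hA⟩ _ hgA)

theorem stmt16_general (k : ℕ) :
    nonIdeal (KIdeal (FinPowIdeal (k - 1))) = bNum ∧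
    covIdeal (KIdeal (FinPowIdeal (k - 1))) = dNum := by
  have hI := isIdealOn_finPowIdeal (k - 1)
  exact ⟨nonIdeal_eq (exists_not_mem_KIdeal_finPowIdeal _)
      fun _ => mem_KIdeal_of_mk_lt_bNum hI,
    covIdeal_eq (exists_KIdeal_cover_mk_le_dNum hI) fun _ => sUnion_ne_univ_of_mk_lt_dNum⟩

/-- For `2 ≤ k < ω`: `non(K_{Fin^{⊗k}}) = 𝔟` and
`cov(K_{Fin^{⊗k}}) = 𝔡`. -/
theorem stmt16 (k : ℕ) (hk : 2 ≤ k) :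
    nonIdeal (KIdeal (FinPowIdeal (k - 1))) = bNum ∧
    covIdeal (KIdeal (FinPowIdeal (k - 1))) = dNum :=
  stmt16_general k

end
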